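/- arXiv:1607.02382 — 2 statements merged into one kernel-verified Lean document; each statement's English description precedes it below -/
import Mathlib

section
/- Let a ≤ b be two target values and suppose b - a ≥ 2δ. Then the function F(x) = h_δ(x - a) + h_δ(x - b) attains its minimum value δ·(b - a) - δ² at every x in the interval [a + δ, b - δ], and F(x) > δ·(b - a) - δ² for x outside [a + δ, b - δ]. -/
noncomputable def huber (δ x : ℝ) : ℝ :=
  if |x| ≤ δ then x ^ 2 / 2 else δ * (|x| - δ / 2)

lemma huber_neg (δ x : ℝ) : huber δ (-x) = huber δ x := by
  simp [huber, abs_neg]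

lemma huber_eq_of_le (δ x : ℝ) (hδ : 0 < δ) (h : δ ≤ x) :
    huber δ x = δ * x - δ ^ 2 / 2 := by
  have hx : 0 ≤ x := le_trans hδ.le h
  rw [huber, abs_of_nonneg hx]
  by_cases hc : x ≤ δ
  · have : x = δ := le_antisymm hc h
    simp [this]; ring
  · simp [hc]; ring

lemma huber_gt_of_lt (δ x : ℝ) (hδ : 0 < δ) (h : x < δ) :
    δ * x - δ ^ 2 / 2 < huber δ x := by
  rw [huber]
  by_cases hc : |x| ≤ δ
  · simp only [if_pos hc]
    nlinarith [sq_nonneg (x - δ)]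
  · simp only [if_neg hc]
    have hx : x < -δ := by
      rcases abs_cases x with ⟨h1, _⟩ | ⟨h1, _⟩
      · exfalso; exact hc (by rw [h1]; exact h.le)
      · push_neg at hc; nlinarith
    rw [abs_of_neg (by linarith)]
    nlinarith

theorem two_target_huber_min (δ a b : ℝ) (hδ : 0 < δ) (hab : a ≤ b)
    (hgap : 2 * δ ≤ b - a) :
    (∀ x ∈ Set.Icc (a + δ) (b - δ),
      huber δ (x - a) + huber δ (x - b) = δ * (b - a) - δ ^ 2) ∧
    (∀ x ∉ Set.Icc (a + δ) (b - δ),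
      δ * (b - a) - δ ^ 2 < huber δ (x - a) + huber δ (x - b)) := by
  constructor
  · rintro x ⟨hx1, hx2⟩
    have h1 : huber δ (x - a) = δ * (x - a) - δ ^ 2 / 2 :=
      huber_eq_of_le δ _ hδ (by linarith)
    have h2 : huber δ (x - b) = δ * (b - x) - δ ^ 2 / 2 := by
      rw [show x - b = -(b - x) by ring, huber_neg]
      exact huber_eq_of_le δ _ hδ (by linarith)
    rw [h1, h2]; ring
  · intro x hx
    rw [Set.mem_Icc, not_and_or, not_le, not_le] at hx
    rcases hx with hx | hx
    · have h1 : δ * (x - a) - δ ^ 2 / 2 < huber δ (x - a) :=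
        huber_gt_of_lt δ _ hδ (by linarith)
      have h2 : huber δ (x - b) = δ * (b - x) - δ ^ 2 / 2 := by
        rw [show x - b = -(b - x) by ring, huber_neg]
        exact huber_eq_of_le δ _ hδ (by linarith)
      rw [h2]; nlinarith
    · have h1 : huber δ (x - a) = δ * (x - a) - δ ^ 2 / 2 :=
        huber_eq_of_le δ _ hδ (by linarith)
      have h2 : δ * (b - x) - δ ^ 2 / 2 < huber δ (x - b) := by
        rw [show x - b = -(b - x) by ring, huber_neg]
        exact huber_gt_of_lt δ _ hδ (by linarith)
      rw [h1]; nlinarith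
end

section
/- For targets a ≤ b with b - a ≥ 2δ and any x ∈ [a + δ, b - δ], small perturbations stay optimal: for all x' with x' ∈ [a + δ, b - δ], h_δ(x - a) + h_δ(x - b) = h_δ(x' - a) + h_δ(x' - b). -/
lemma huber_val (δ a b : ℝ) (hδ : 0 < δ) (x : ℝ)
    (hx : x ∈ Set.Icc (a + δ) (b - δ)) :
    huber δ (x - a) + huber δ (x - b) = δ * (b - a - δ) := by
  obtain ⟨h1, h2⟩ := hx
  have ha : δ ≤ x - a := by linarith
  have hb : x - b ≤ -δ := by linarith
  have habs1 : |x - a| = x - a := abs_of_nonneg (by linarith)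
  have habs2 : |x - b| = b - x := by rw [abs_of_nonpos (by linarith)]; ring
  unfold huber
  rw [habs1, habs2]
  rcases eq_or_lt_of_le ha with h | h
  · rw [if_pos h.symm.le, ← h]
    rcases eq_or_lt_of_le hb with h' | h'
    · have : b - x = δ := by linarith
      rw [this, if_pos le_rfl]; nlinarith
    · rw [if_neg (by linarith)]; nlinarith
  · rw [if_neg (by linarith)]
    rcases eq_or_lt_of_le hb with h' | h'
    · have : b - x = δ := by linarith
      rw [this, if_pos le_rfl]; nlinarith
    · rw [if_neg (by linarith)]; ring

theorem huber_flat_between_targets (δ a b : ℝ) (hδ : 0 < δ) (hab : a ≤ b)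
    (hgap : 2 * δ ≤ b - a) (x x' : ℝ)
    (hx : x ∈ Set.Icc (a + δ) (b - δ)) (hx' : x' ∈ Set.Icc (a + δ) (b - δ)) :
    huber δ (x - a) + huber δ (x - b) = huber δ (x' - a) + huber δ (x' - b) := by
  rw [huber_val δ a b hδ x hx, huber_val δ a b hδ x' hx']
end
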